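/- Let A₁ = ℚ[x, y, z], A₂ = ℚ[a, b, c, d], B = ℚ[x, y], and let π₁ : A₁ → B be the ℚ-algebra homomorphism with x ↦ x, y ↦ y, z ↦ 0, and π₂ : A₂ → B the ℚ-algebra homomorphism with a ↦ x, b ↦ 2y − x², c ↦ y, d ↦ −y(x² − 4y). Then the fiber product A = A₁ ×_B A₂ (taken along π₁ and π₂) is generated as a ℚ-algebra by the five elements (x, a), (y, c), (z, 0), (2y − x², b), and (−y(x² − 4y), d). -/

import Mathlib

/-!
For `(p, q)` in the fiber product, let `σ : A₁ → A₁ × A₂` send `x, y, z` to `(x, a), (y, c)` and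
`(z, 0)`. Then `σ p` lies in the subalgebra, has first coordinate `p`, and
`(p, q) - σ p = (0, k)` with `k ∈ ker π₂`. This kernel is generated by `u = b - (2c - a²)` and
`v = d + c(a² - 4c)`, since `π₂` followed by `x ↦ a, y ↦ c` is the identity modulo `(u, v)`.
The pairs `(0, u)` and `(0, v)` are generators minus elements of the image of `σ`, and the `k`
with `(0, k)` in the subalgebra form an ideal of `A₂`, because sending `a, b, c, d` to the
generators other than `(z, 0)` makes every element of `A₂` a second coordinate of the subalgebra.
-/

open MvPolynomial

namespace Stmt9

/-- `A₁ = ℚ[x, y, z]` with `x = X 0`, `y = X 1`, `z = X 2`. -/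
abbrev A1 : Type := MvPolynomial (Fin 3) ℚ

/-- `A₂ = ℚ[a, b, c, d]` with `a = X 0`, `b = X 1`, `c = X 2`, `d = X 3`. -/
abbrev A2 : Type := MvPolynomial (Fin 4) ℚ

/-- `B = ℚ[x, y]` with `x = X 0`, `y = X 1`. -/
abbrev B : Type := MvPolynomial (Fin 2) ℚ

/-- `π₁ : A₁ → B`, `x ↦ x`, `y ↦ y`, `z ↦ 0`. -/
noncomputable def π₁ : A1 →ₐ[ℚ] B := aeval ![X 0, X 1, 0]

/-- `π₂ : A₂ → B`, `a ↦ x`, `b ↦ 2y − x²`, `c ↦ y`, `d ↦ −y(x² − 4y)`. -/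
noncomputable def π₂ : A2 →ₐ[ℚ] B :=
  aeval ![X 0, 2 * X 1 - X 0 ^ 2, X 1, -X 1 * (X 0 ^ 2 - 4 * X 1)]

theorem aeval_mem_adjoin_of_range_subset {R σ A : Type*} [CommSemiring R] [CommSemiring A]
    [Algebra R A] {f : σ → A} {s : Set A} (hf : Set.range f ⊆ s) (p : MvPolynomial σ R) :
    aeval f p ∈ Algebra.adjoin R s :=
  Algebra.adjoin_mono hf <| by
    rw [Algebra.adjoin_range_eq_range_aeval]
    exact ⟨p, rfl⟩

theorem ker_le_of_comp_X_sub_mem {R σ B : Type*} [CommRing R] [CommSemiring B] [Algebra R B]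
    (φ : MvPolynomial σ R →ₐ[R] B) (ψ : B →ₐ[R] MvPolynomial σ R) (I : Ideal (MvPolynomial σ R))
    (h : ∀ i, ψ (φ (X i)) - X i ∈ I) : RingHom.ker φ ≤ I := by
  have hcomp : (Ideal.Quotient.mkₐ R I).comp (ψ.comp φ) = Ideal.Quotient.mkₐ R I :=
    algHom_ext fun i => Ideal.Quotient.eq.2 (h i)
  intro k hk
  rw [← Ideal.Quotient.eq_zero_iff_mem, ← Ideal.Quotient.mkₐ_eq_mk R, ← AlgHom.congr_fun hcomp k]
  simp [(RingHom.mem_ker).1 hk]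

theorem eq_equalizer_of_surjective {R A₁ A₂ B : Type*} [CommSemiring R] [CommSemiring A₁]
    [CommRing A₂] [CommRing B] [Algebra R A₁] [Algebra R A₂] [Algebra R B]
    (f : A₁ →ₐ[R] B) (g : A₂ →ₐ[R] B)
    (S : Subalgebra R (A₁ × A₂)) (s : Set A₂)
    (hS : S ≤ AlgHom.equalizer (f.comp (AlgHom.fst R A₁ A₂)) (g.comp (AlgHom.snd R A₁ A₂)))
    (hfst : ∀ p, ∃ x ∈ S, x.1 = p) (hsnd : ∀ q, ∃ x ∈ S, x.2 = q)
    (hker : RingHom.ker g ≤ Ideal.span s) (hs : ∀ k ∈ s, ((0, k) : A₁ × A₂) ∈ S) :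
    S = AlgHom.equalizer (f.comp (AlgHom.fst R A₁ A₂)) (g.comp (AlgHom.snd R A₁ A₂)) := by
  have hspan : ∀ k ∈ Ideal.span s, ((0, k) : A₁ × A₂) ∈ S := by
    intro k hk
    induction hk using Submodule.span_induction with
    | mem k hk => exact hs k hk
    | zero => exact S.zero_mem
    | add k l _ _ hk hl => simpa using S.add_mem hk hl
    | smul a k _ hk =>
      obtain ⟨x, hx, rfl⟩ := hsnd a
      have hmul : x * (0, k) = (0, x.2 * k) := Prod.ext (mul_zero _) rfl
      simpa [hmul] using S.mul_mem hx hk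
  refine le_antisymm hS fun ⟨p, q⟩ hpq => ?_
  obtain ⟨x, hx, rfl⟩ := hfst p
  have hxeq : f x.1 = g x.2 := hS hx
  have hdiff : q - x.2 ∈ RingHom.ker g := by
    rw [RingHom.mem_ker, map_sub, ← hxeq, sub_eq_zero]
    exact hpq.symm
  have hsum : x + (0, q - x.2) = (x.1, q) := Prod.ext (add_zero _) (add_sub_cancel _ _)
  simpa [hsum] using S.add_mem hx (hspan _ (hker hdiff))

def generators : Set (A1 × A2) :=
  {(X 0, X 0), (X 1, X 2), (X 2, 0), (2 * X 1 - X 0 ^ 2, X 1), (-X 1 * (X 0 ^ 2 - 4 * X 1), X 3)}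

def kerGenerators : Set A2 :=
  {X 1 - (2 * X 2 - X 0 ^ 2), X 3 + X 2 * (X 0 ^ 2 - 4 * X 2)}

noncomputable def sectionFst : A1 →ₐ[ℚ] A1 × A2 :=
  aeval ![(X 0, X 0), (X 1, X 2), (X 2, 0)]

noncomputable def sectionSnd : A2 →ₐ[ℚ] A1 × A2 :=
  aeval ![(X 0, X 0), (2 * X 1 - X 0 ^ 2, X 1), (X 1, X 2), (-X 1 * (X 0 ^ 2 - 4 * X 1), X 3)]

theorem sectionFst_mem (p : A1) : sectionFst p ∈ Algebra.adjoin ℚ generators :=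
  aeval_mem_adjoin_of_range_subset (Set.range_subset_iff.2 fun i => by
    fin_cases i <;> simp [generators]) p

theorem sectionSnd_mem (q : A2) : sectionSnd q ∈ Algebra.adjoin ℚ generators :=
  aeval_mem_adjoin_of_range_subset (Set.range_subset_iff.2 fun i => by
    fin_cases i <;> simp [generators]) q

theorem fst_sectionFst (p : A1) : (sectionFst p).1 = p := by
  have : (AlgHom.fst ℚ A1 A2).comp sectionFst = AlgHom.id ℚ A1 :=
    algHom_ext fun i => by fin_cases i <;> simp [sectionFst]
  exact AlgHom.congr_fun this p

theorem snd_sectionSnd (q : A2) : (sectionSnd q).2 = q := by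
  have : (AlgHom.snd ℚ A1 A2).comp sectionSnd = AlgHom.id ℚ A2 :=
    algHom_ext fun i => by fin_cases i <;> simp [sectionSnd]
  exact AlgHom.congr_fun this q

theorem ker_π₂_le : RingHom.ker π₂ ≤ Ideal.span kerGenerators := by
  refine ker_le_of_comp_X_sub_mem π₂ (aeval ![X 0, X 2]) _ fun i => ?_
  fin_cases i
  · simp [π₂]
  · show aeval ![X 0, X 2] (π₂ (X 1)) - X 1 ∈ _
    have : aeval ![X 0, X 2] (π₂ (X 1)) - X 1 = -(X 1 - (2 * X 2 - X 0 ^ 2) : A2) := by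
      simp [π₂, map_ofNat]
    rw [this]
    exact neg_mem (Ideal.subset_span (by simp [kerGenerators]))
  · simp [π₂]
  · show aeval ![X 0, X 2] (π₂ (X 3)) - X 3 ∈ _
    have : aeval ![X 0, X 2] (π₂ (X 3)) - X 3 = -(X 3 + X 2 * (X 0 ^ 2 - 4 * X 2) : A2) := by
      simp [π₂, map_ofNat]; ring
    rw [this]
    exact neg_mem (Ideal.subset_span (by simp [kerGenerators]))

theorem adjoin_generators_le_equalizer :
    Algebra.adjoin ℚ generators ≤
      AlgHom.equalizer (π₁.comp (AlgHom.fst ℚ A1 A2)) (π₂.comp (AlgHom.snd ℚ A1 A2)) := by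
  refine Algebra.adjoin_le fun x hx => ?_
  simp only [generators, Set.mem_insert_iff, Set.mem_singleton_iff] at hx
  rcases hx with rfl | rfl | rfl | rfl | rfl <;> simp [π₁, π₂, map_ofNat]

theorem zero_prod_mem_adjoin_generators :
    ∀ k ∈ kerGenerators, ((0, k) : A1 × A2) ∈ Algebra.adjoin ℚ generators := by
  have hgen {x} (hx : x ∈ generators) : x ∈ Algebra.adjoin ℚ generators := Algebra.subset_adjoin hx
  simp only [kerGenerators, Set.mem_insert_iff, Set.mem_singleton_iff]
  rintro k (rfl | rfl)
  · have hdiff := sub_mem (hgen (x := (2 * X 1 - X 0 ^ 2, X 1)) (by simp [generators]))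
      (sectionFst_mem (2 * X 1 - X 0 ^ 2))
    convert hdiff using 1
    simp [sectionFst, Prod.ext_iff]
  · have hdiff := sub_mem (hgen (x := (-X 1 * (X 0 ^ 2 - 4 * X 1), X 3)) (by simp [generators]))
      (sectionFst_mem (-X 1 * (X 0 ^ 2 - 4 * X 1)))
    convert hdiff using 1
    simp [sectionFst, Prod.ext_iff]

/-- The fiber product `A = A₁ ×_B A₂` along `π₁` and `π₂` is generated as a
ℚ-algebra by the five elements `(x, a)`, `(y, c)`, `(z, 0)`, `(2y − x², b)` and
`(−y(x² − 4y), d)`. -/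
theorem stmt9 :
    Algebra.adjoin ℚ
        ({(X 0, X 0), (X 1, X 2), (X 2, 0), (2 * X 1 - X 0 ^ 2, X 1),
          (-X 1 * (X 0 ^ 2 - 4 * X 1), X 3)} : Set (A1 × A2)) =
      AlgHom.equalizer (π₁.comp (AlgHom.fst ℚ A1 A2)) (π₂.comp (AlgHom.snd ℚ A1 A2)) :=
  eq_equalizer_of_surjective π₁ π₂ (Algebra.adjoin ℚ generators) _ adjoin_generators_le_equalizer
    (fun p => ⟨_, sectionFst_mem p, fst_sectionFst p⟩)
    (fun q => ⟨_, sectionSnd_mem q, snd_sectionSnd q⟩) ker_π₂_le zero_prod_mem_adjoin_generators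

end Stmt9
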